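/- arXiv:1807.01739 — 7 statements merged into one kernel-verified Lean document; each statement's English description precedes it below -/
import Mathlib

section
/- The function (X, Y) ↦ trace(Y* R Y X⁻¹) is jointly convex on the set of pairs (X, Y) with X Hermitian positive definite, for any Hermitian positive semidefinite R. -/
/-!
For `W : Matrix m n 𝕜` the function `(X, Y) ↦ 2 Re tr(Wᴴ R Y) - Re tr(Wᴴ R W X)` is linear, and
it minorizes `(X, Y) ↦ Re tr(Yᴴ R Y X⁻¹)` on `{X ≻ 0}` because, with `Z = W X`, the difference is
`Re tr((Y - Z)ᴴ R (Y - Z) X⁻¹) ≥ 0`. Equality holds at `W = Y X⁻¹`, so the function is a pointwise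
maximum of linear functions, hence convex.
-/

open Matrix
open scoped ComplexOrder

theorem ConvexOn.of_forall_le_of_exists_eq {𝕜 E β ι : Type*} [Semiring 𝕜] [PartialOrder 𝕜]
    [AddCommMonoid E] [AddCommMonoid β] [PartialOrder β] [IsOrderedAddMonoid β] [SMul 𝕜 E]
    [Module 𝕜 β] [PosSMulMono 𝕜 β] {s : Set E} (hs : Convex 𝕜 s) {f : E → β}
    {g : ι → E → β} (hg : ∀ i, ConvexOn 𝕜 s (g i)) (hle : ∀ i, ∀ x ∈ s, g i x ≤ f x)
    (heq : ∀ x ∈ s, ∃ i, g i x = f x) : ConvexOn 𝕜 s f := by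
  refine ⟨hs, fun x hx y hy a b ha hb hab => ?_⟩
  obtain ⟨i, hi⟩ := heq _ (hs hx hy ha hb hab)
  calc f (a • x + b • y) = g i (a • x + b • y) := hi.symm
    _ ≤ a • g i x + b • g i y := (hg i).2 hx hy ha hb hab
    _ ≤ a • f x + b • f y := by
      gcongr
      exacts [hle i x hx, hle i y hy]

namespace Matrix

open RCLike (re)

variable {𝕜 m n : Type*} [RCLike 𝕜]

theorem convex_setOf_posDef : Convex ℝ {A : Matrix n n 𝕜 | A.PosDef} := by
  intro A hA B hB a b ha hb hab
  rcases ha.eq_or_lt with rfl | ha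
  · simp_all
  · exact (hA.smul ha).add_posSemidef (hB.posSemidef.smul hb)

variable [Fintype m] [Fintype n]

theorem PosSemidef.trace_mul_nonneg {A B : Matrix n n 𝕜} (hA : A.PosSemidef)
    (hB : B.PosSemidef) : 0 ≤ (A * B).trace := by
  classical
  open scoped MatrixOrder in
  obtain ⟨C, rfl⟩ := CStarAlgebra.nonneg_iff_eq_star_mul_self.mp hB.nonneg
  rw [star_eq_conjTranspose, ← Matrix.mul_assoc, trace_mul_cycle]
  exact (hA.mul_mul_conjTranspose_same C).trace_nonneg

theorem PosSemidef.two_mul_re_trace_sub_le {R : Matrix m m 𝕜} {P : Matrix n n 𝕜}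
    (hR : R.PosSemidef) (hP : P.PosSemidef) (Y Z : Matrix m n 𝕜) :
    2 * re (Zᴴ * R * Y * P).trace - re (Zᴴ * R * Z * P).trace ≤
      re (Yᴴ * R * Y * P).trace := by
  have hcross : re (Yᴴ * R * Z * P).trace = re (Zᴴ * R * Y * P).trace := by
    rw [← RCLike.conj_re, ← RCLike.star_def, ← trace_conjTranspose]
    simp only [conjTranspose_mul, conjTranspose_conjTranspose, hR.isHermitian.eq,
      hP.isHermitian.eq, Matrix.mul_assoc]
    rw [trace_mul_comm]
    simp only [Matrix.mul_assoc]
  have hsq : 0 ≤ re ((Y - Z)ᴴ * R * (Y - Z) * P).trace :=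
    RCLike.nonneg_iff.mp ((hR.conjTranspose_mul_mul_same _).trace_mul_nonneg hP) |>.1
  simp only [conjTranspose_sub, Matrix.sub_mul, Matrix.mul_sub, trace_sub, map_sub] at hsq
  linarith

variable [DecidableEq n]

def traceTangent (R : Matrix m m 𝕜) (W : Matrix m n 𝕜) :
    Matrix n n 𝕜 × Matrix m n 𝕜 →ₗ[ℝ] ℝ where
  toFun p := 2 * re (Wᴴ * R * p.2).trace - re (Wᴴ * R * W * p.1).trace
  map_add' p q := by
    simp only [Prod.fst_add, Prod.snd_add, Matrix.mul_add, trace_add, map_add]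
    ring
  map_smul' c p := by
    simp only [Prod.smul_fst, Prod.smul_snd, Matrix.mul_smul, trace_smul, RCLike.smul_re,
      RingHom.id_apply, smul_eq_mul]
    ring

variable {R : Matrix m m 𝕜} {X : Matrix n n 𝕜}

theorem traceTangent_apply_eq (hX : X.IsHermitian) (hXu : IsUnit X) (Y W : Matrix m n 𝕜) :
    traceTangent R W (X, Y) =
      2 * re ((W * X)ᴴ * R * Y * X⁻¹).trace - re ((W * X)ᴴ * R * (W * X) * X⁻¹).trace := by
  have hdet : IsUnit X.det := (isUnit_iff_isUnit_det X).mp hXu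
  have hcross : ((W * X)ᴴ * R * Y * X⁻¹).trace = (Wᴴ * R * Y).trace := by
    rw [conjTranspose_mul, hX.eq,
      show X * Wᴴ * R * Y * X⁻¹ = X * (Wᴴ * R * Y * X⁻¹) by simp only [Matrix.mul_assoc],
      trace_mul_comm, nonsing_inv_mul_cancel_right _ _ hdet]
  have hsq : ((W * X)ᴴ * R * (W * X) * X⁻¹).trace = (Wᴴ * R * W * X).trace := by
    rw [conjTranspose_mul, hX.eq, ← Matrix.mul_assoc, mul_nonsing_inv_cancel_right _ _ hdet,
      show X * Wᴴ * R * W = X * (Wᴴ * R * W) by simp only [Matrix.mul_assoc], trace_mul_comm]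
  rw [hcross, hsq]
  rfl

theorem PosSemidef.traceTangent_le (hR : R.PosSemidef) (hX : X.PosDef) (Y W : Matrix m n 𝕜) :
    traceTangent R W (X, Y) ≤ re (Yᴴ * R * Y * X⁻¹).trace := by
  rw [traceTangent_apply_eq hX.isHermitian hX.isUnit]
  exact hR.two_mul_re_trace_sub_le hX.inv.posSemidef Y (W * X)

theorem traceTangent_mul_inv_self (hX : X.IsHermitian) (hXu : IsUnit X) (Y : Matrix m n 𝕜) :
    traceTangent R (Y * X⁻¹) (X, Y) = re (Yᴴ * R * Y * X⁻¹).trace := by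
  have hdet : IsUnit X.det := (isUnit_iff_isUnit_det X).mp hXu
  rw [traceTangent_apply_eq hX hXu, nonsing_inv_mul_cancel_right _ _ hdet]
  ring

end Matrix

/-- (X, Y) ↦ trace(Yᴴ R Y X⁻¹) is jointly convex over {X ≻ 0}, for R ⪰ 0. -/
theorem stmt5 {m n : ℕ} (R : Matrix (Fin m) (Fin m) ℂ) (hR : R.PosSemidef) :
    ConvexOn ℝ {p : Matrix (Fin n) (Fin n) ℂ × Matrix (Fin m) (Fin n) ℂ | p.1.PosDef}
      (fun p => ((p.2ᴴ * R * p.2 * p.1⁻¹).trace).re) := by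
  have hs : Convex ℝ {p : Matrix (Fin n) (Fin n) ℂ × Matrix (Fin m) (Fin n) ℂ | p.1.PosDef} :=
    (convex_setOf_posDef (𝕜 := ℂ) (n := Fin n)).linear_preimage (LinearMap.fst ℝ _ _)
  refine ConvexOn.of_forall_le_of_exists_eq hs (fun W => (traceTangent R W).convexOn hs) ?_ ?_
  · rintro W ⟨X, Y⟩ (hX : X.PosDef)
    exact hR.traceTangent_le hX Y W
  · rintro ⟨X, Y⟩ (hX : X.PosDef)
    exact ⟨Y * X⁻¹, traceTangent_mul_inv_self hX.isHermitian hX.isUnit Y⟩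
end

section
/- Let f be μ-strongly convex with L-Lipschitz gradient on ℝ^N and g proper closed convex. For the proximal gradient iteration Y⁺ = prox_{αg}(Y − α∇f(Y)) with step-size α ∈ (0, 1/L], and Y* the unique minimizer of f + g, one has ‖Y⁺ − Y*‖² ≤ (1 − μα) ‖Y − Y*‖². -/
/-!
The minimizer `Y*` satisfies `-α ∇f(Y*) ∈ ∂(α g)(Y*)`, so it is a fixed point of the proximal
gradient map. Subdifferentials of convex functions are monotone, which makes the prox firmly
nonexpansive: `‖Y⁺ - Y*‖ ≤ ‖(Y - α ∇f(Y)) - (Y* - α ∇f(Y*))‖`. With `u = Y - Y*` and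
`Δ = ∇f(Y) - ∇f(Y*)`, strong convexity gives `μ ‖u‖² ≤ ⟪Δ, u⟫` and the Baillon–Haddad
cocoercivity of an `L`-smooth convex function gives `‖Δ‖² ≤ L ⟪Δ, u⟫`, hence for `α ≤ 1 / L`
`‖u - α Δ‖² = ‖u‖² - 2α ⟪Δ, u⟫ + α² ‖Δ‖² ≤ ‖u‖² - α ⟪Δ, u⟫ ≤ (1 - μα) ‖u‖²`.
-/

open Set InnerProductSpace
open scoped RealInnerProductSpace NNReal

variable {F : Type*} [NormedAddCommGroup F] [InnerProductSpace ℝ F]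

def HasSubgradientAt (c : F → ℝ) (s x : F) : Prop :=
  ∀ z, c x + ⟪s, z - x⟫_ℝ ≤ c z

namespace HasSubgradientAt

variable {c : F → ℝ} {s t x y : F}

lemma const_mul (h : HasSubgradientAt c s x) {a : ℝ} (ha : 0 ≤ a) :
    HasSubgradientAt (fun y => a * c y) (a • s) x := fun z => by
  rw [real_inner_smul_left, ← mul_add]
  exact mul_le_mul_of_nonneg_left (h z) ha

lemma inner_sub_nonneg (hx : HasSubgradientAt c s x) (hy : HasSubgradientAt c t y) :
    0 ≤ ⟪s - t, x - y⟫_ℝ := by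
  have hxy := hx y
  have hyx := hy x
  rw [← neg_sub x y, inner_neg_right] at hxy
  rw [inner_sub_left]
  linarith

lemma norm_sub_le {v w p q : F} (hp : HasSubgradientAt c (v - p) p)
    (hq : HasSubgradientAt c (w - q) q) : ‖p - q‖ ≤ ‖v - w‖ := by
  have hmono := hp.inner_sub_nonneg hq
  rw [show v - p - (w - q) = (v - w) - (p - q) by abel, inner_sub_left,
    real_inner_self_eq_norm_sq] at hmono
  nlinarith [real_inner_le_norm (v - w) (p - q), norm_nonneg (p - q), norm_nonneg (v - w)]

end HasSubgradientAt

lemma ConvexOn.apply_add_smul_sub_le {c : F → ℝ} (hc : ConvexOn ℝ univ c) (x z : F) {t : ℝ}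
    (ht : t ∈ Icc (0 : ℝ) 1) : c (x + t • (z - x)) ≤ c x + t * (c z - c x) := by
  have h := hc.2 (mem_univ x) (mem_univ z) (sub_nonneg.2 ht.2) ht.1 (sub_add_cancel 1 t)
  rw [← AffineMap.lineMap_apply_module, AffineMap.lineMap_apply_module', add_comm] at h
  simp only [smul_eq_mul] at h
  linarith

variable [CompleteSpace F]

lemma HasGradientAt.hasDerivAt_comp_add_smul {f : F → ℝ} {g x d : F} {t : ℝ}
    (h : HasGradientAt f g (x + t • d)) :
    HasDerivAt (fun s : ℝ => f (x + s • d)) ⟪g, d⟫_ℝ t := by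
  have hline : HasDerivAt (fun s : ℝ => x + s • d) d t :=
    ((hasDerivAt_id t).smul_const d).const_add x |>.congr_deriv (one_smul ℝ d)
  exact h.hasFDerivAt.comp_hasDerivAt t hline

lemma hasGradientAt_half_norm_sub_sq (v x : F) :
    HasGradientAt (fun y => (1 / 2 : ℝ) * ‖y - v‖ ^ 2) (x - v) x := by
  rw [hasGradientAt_iff_hasFDerivAt]
  refine (((hasFDerivAt_id x).sub_const v).norm_sq.const_mul (1 / 2 : ℝ)).congr_fderiv ?_
  ext y
  simp

lemma ConvexOn.hasSubgradientAt_of_hasGradientAt {f : F → ℝ} (hf : ConvexOn ℝ univ f) {g x : F}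
    (h : HasGradientAt f g x) : HasSubgradientAt f g x := fun z => by
  have hline : ConvexOn ℝ univ (fun t : ℝ => f (x + t • (z - x))) := by
    simpa [Function.comp_def, AffineMap.lineMap_apply_module', add_comm] using
      hf.comp_affineMap (AffineMap.lineMap x z)
  have hderiv := HasGradientAt.hasDerivAt_comp_add_smul (d := z - x) (t := 0)
    (by rwa [zero_smul, add_zero])
  have := hline.le_slope_of_hasDerivAt (mem_univ 0) (mem_univ 1) one_pos hderiv
  simp only [slope_def_field, one_smul, add_sub_cancel, zero_smul, add_zero, sub_zero,
    div_one] at this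
  linarith

lemma IsMinOn.hasSubgradientAt_neg_gradient {φ c : F → ℝ} (hc : ConvexOn ℝ univ c) {g x : F}
    (hφ : HasGradientAt φ g x) (hmin : IsMinOn (fun y => φ y + c y) univ x) :
    HasSubgradientAt c (-g) x := fun z => by
  set ψ : ℝ → ℝ := fun t => φ (x + t • (z - x)) + t * (c z - c x)
  have hψ : HasDerivAt ψ (⟪g, z - x⟫_ℝ + 1 * (c z - c x)) 0 :=
    (HasGradientAt.hasDerivAt_comp_add_smul (by rwa [zero_smul, add_zero])).add
      ((hasDerivAt_id 0).mul_const _)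
  have hψmin : IsMinOn ψ (Icc 0 1) 0 := fun t ht => by
    have hconv := hc.apply_add_smul_sub_le x z ht
    have hxt := hmin (mem_univ (x + t • (z - x)))
    simp only [mem_ofPred_eq, ψ, zero_smul, add_zero, zero_mul] at hxt ⊢
    linarith
  have hsegment : segment ℝ (0 : ℝ) (0 + 1) ⊆ Icc 0 1 := by
    simp [segment_eq_Icc]
  have := (IsMinOn.localize hψmin).hasFDerivWithinAt_nonneg hψ.hasFDerivAt.hasFDerivWithinAt
    (mem_posTangentConeAt_of_segment_subset hsegment)
  simp only [one_mul, ContinuousLinearMap.toSpanSingleton_apply, smul_eq_mul] at this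
  rw [inner_neg_left]
  linarith

lemma IsMinOn.hasSubgradientAt_prox {c : F → ℝ} (hc : ConvexOn ℝ univ c) {v p : F}
    (hmin : IsMinOn (fun y => c y + (1 / 2) * ‖y - v‖ ^ 2) univ p) :
    HasSubgradientAt c (v - p) p := by
  simpa using IsMinOn.hasSubgradientAt_neg_gradient hc (hasGradientAt_half_norm_sub_sq v p)
    (by simpa only [add_comm] using hmin)

variable {f : F → ℝ} {f' : F → F}

lemma StrongConvexOn.mul_sq_norm_sub_le_inner_gradient_sub {μ : ℝ} (hf : StrongConvexOn univ μ f)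
    (hgrad : ∀ x, HasGradientAt f (f' x) x) (x y : F) :
    μ * ‖x - y‖ ^ 2 ≤ ⟪f' x - f' y, x - y⟫_ℝ := by
  have hconv := strongConvexOn_iff_convex.mp hf
  have hgrad' : ∀ x, HasGradientAt (fun x => f x - μ / 2 * ‖x‖ ^ 2) (f' x - μ • x) x := by
    intro x
    rw [hasGradientAt_iff_hasFDerivAt]
    refine ((hgrad x).hasFDerivAt.sub
      ((hasFDerivAt_id x).norm_sq.const_mul (μ / 2))).congr_fderiv ?_
    ext y
    simp only [id_eq, ContinuousLinearMap.comp_id, sub_apply, toDual_apply_apply, smul_apply,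
      coe_innerSL_apply, nsmul_eq_mul, Nat.cast_ofNat, smul_eq_mul, map_sub, map_smul,
      sub_right_inj]
    ring
  have hmono := (hconv.hasSubgradientAt_of_hasGradientAt (hgrad' x)).inner_sub_nonneg
    (hconv.hasSubgradientAt_of_hasGradientAt (hgrad' y))
  rw [show f' x - μ • x - (f' y - μ • y) = (f' x - f' y) - μ • (x - y) by module, inner_sub_left,
    real_inner_smul_left, real_inner_self_eq_norm_sq] at hmono
  linarith

lemma le_add_inner_gradient_add_of_lipschitzWith {K : ℝ≥0}
    (hgrad : ∀ x, HasGradientAt f (f' x) x) (hLip : LipschitzWith K f') (x y : F) :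
    f y ≤ f x + ⟪f' x, y - x⟫_ℝ + K / 2 * ‖y - x‖ ^ 2 := by
  set d := y - x
  set ψ : ℝ → ℝ := fun t => f (x + t • d) - t * ⟪f' x, d⟫_ℝ - K / 2 * ‖d‖ ^ 2 * t ^ 2
  have hψ : ∀ t, HasDerivAt ψ (⟪f' (x + t • d), d⟫_ℝ - ⟪f' x, d⟫_ℝ - K * ‖d‖ ^ 2 * t) t := by
    intro t
    have hline : HasDerivAt (fun s : ℝ => f (x + s • d)) ⟪f' (x + t • d), d⟫_ℝ t :=
      (hgrad _).hasDerivAt_comp_add_smul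
    refine ((hline.sub (hasDerivAt_mul_const _)).sub
      ((hasDerivAt_pow 2 t).const_mul (K / 2 * ‖d‖ ^ 2))).congr_deriv ?_
    push_cast
    ring
  have hψ' : ∀ t ∈ interior (Ici (0 : ℝ)),
      ⟪f' (x + t • d), d⟫_ℝ - ⟪f' x, d⟫_ℝ - K * ‖d‖ ^ 2 * t ≤ 0 := by
    intro t ht
    rw [interior_Ici] at ht
    have hLipt : ‖f' (x + t • d) - f' x‖ ≤ K * (t * ‖d‖) := by
      simpa [norm_smul, abs_of_pos (mem_Ioi.1 ht)] using hLip.norm_sub_le (x + t • d) x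
    have := real_inner_le_norm (f' (x + t • d) - f' x) d
    rw [inner_sub_left] at this
    nlinarith [norm_nonneg d]
  have hanti : AntitoneOn ψ (Ici 0) :=
    antitoneOn_of_hasDerivWithinAt_nonpos (convex_Ici 0)
      (fun t _ => (hψ t).continuousAt.continuousWithinAt) (fun t _ => (hψ t).hasDerivWithinAt) hψ'
  have h10 := hanti (mem_Ici.2 le_rfl) (mem_Ici.2 zero_le_one) zero_le_one
  simp only [ψ, zero_smul, one_smul, add_zero, zero_mul, sub_zero, one_pow, mul_one, d,
    add_sub_cancel] at h10
  linarith

lemma ConvexOn.sq_norm_gradient_sub_le_mul_inner {K : ℝ≥0} (hf : ConvexOn ℝ univ f)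
    (hgrad : ∀ x, HasGradientAt f (f' x) x) (hLip : LipschitzWith K f') (hK : 0 < K) (x y : F) :
    ‖f' x - f' y‖ ^ 2 ≤ K * ⟪f' x - f' y, x - y⟫_ℝ := by
  have hK' : (0 : ℝ) < K := hK
  -- the subgradient inequality at `u`, evaluated at the gradient step `w - Δ / K` from `w`,
  -- combined with the descent lemma at `w`
  have half : ∀ u w, ‖f' w - f' u‖ ^ 2 / (2 * K) ≤ f w - f u - ⟪f' u, w - u⟫_ℝ := by
    intro u w
    set Δ := f' w - f' u
    have hdesc := le_add_inner_gradient_add_of_lipschitzWith hgrad hLip w (w - (K : ℝ)⁻¹ • Δ)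
    have hsub := hf.hasSubgradientAt_of_hasGradientAt (hgrad u) (w - (K : ℝ)⁻¹ • Δ)
    rw [sub_sub_cancel_left, inner_neg_right, norm_neg, norm_smul, real_inner_smul_right,
      Real.norm_of_nonneg (inv_nonneg.2 hK'.le)] at hdesc
    rw [show w - (K : ℝ)⁻¹ • Δ - u = (w - u) - (K : ℝ)⁻¹ • Δ by abel, inner_sub_right,
      real_inner_smul_right] at hsub
    have hΔ : ⟪f' w, Δ⟫_ℝ - ⟪f' u, Δ⟫_ℝ = ‖Δ‖ ^ 2 := by
      rw [← inner_sub_left, real_inner_self_eq_norm_sq]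
    have : ‖Δ‖ ^ 2 / (2 * K) = (K : ℝ)⁻¹ * (⟪f' w, Δ⟫_ℝ - ⟪f' u, Δ⟫_ℝ)
        - K / 2 * ((K : ℝ)⁻¹ * ‖Δ‖) ^ 2 := by
      rw [hΔ]; field_simp; ring
    linarith
  have hxy := half y x
  have hyx := half x y
  rw [norm_sub_rev] at hyx
  rw [← neg_sub x y, inner_neg_right] at hyx
  have : ‖f' x - f' y‖ ^ 2 / K ≤ ⟪f' x - f' y, x - y⟫_ℝ := by
    rw [inner_sub_left]
    have : ‖f' x - f' y‖ ^ 2 / K = ‖f' x - f' y‖ ^ 2 / (2 * K) + ‖f' x - f' y‖ ^ 2 / (2 * K) := by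
      field_simp; ring
    linarith
  rwa [div_le_iff₀' hK'] at this

lemma StrongConvexOn.sq_norm_gradient_step_sub_le {μ α : ℝ} {K : ℝ≥0}
    (hf : StrongConvexOn univ μ f) (hμ : 0 ≤ μ) (hgrad : ∀ x, HasGradientAt f (f' x) x)
    (hLip : LipschitzWith K f') (hK : 0 < K) (hα : 0 ≤ α) (hαK : α * K ≤ 1) (x y : F) :
    ‖(x - α • f' x) - (y - α • f' y)‖ ^ 2 ≤ (1 - μ * α) * ‖x - y‖ ^ 2 := by
  have hstrong := hf.mul_sq_norm_sub_le_inner_gradient_sub hgrad x y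
  have hcoco := (strongConvexOn_zero.mp (hf.mono hμ)).sq_norm_gradient_sub_le_mul_inner
    hgrad hLip hK x y
  set P := ⟪f' x - f' y, x - y⟫_ℝ
  have hP : 0 ≤ P := (mul_nonneg hμ (sq_nonneg _)).trans hstrong
  have hexpand : ‖(x - α • f' x) - (y - α • f' y)‖ ^ 2
      = ‖x - y‖ ^ 2 - 2 * α * P + α ^ 2 * ‖f' x - f' y‖ ^ 2 := by
    rw [show (x - α • f' x) - (y - α • f' y) = (x - y) - α • (f' x - f' y) by module,
      norm_sub_sq_real, real_inner_smul_right, norm_smul, Real.norm_of_nonneg hα, mul_pow,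
      real_inner_comm]
    ring
  rw [hexpand]
  -- `α ^ 2 * ‖Δ‖ ^ 2 ≤ α ^ 2 * K * P ≤ α * P` is where the step-size bound `α ≤ 1 / K` enters
  nlinarith [mul_le_mul_of_nonneg_left hcoco (sq_nonneg α), mul_nonneg (mul_nonneg hα hP)
    (sub_nonneg.2 hαK), mul_le_mul_of_nonneg_left hstrong hα]

theorem stmt8_general {N : ℕ} (f g : EuclideanSpace ℝ (Fin N) → ℝ)
    (f' : EuclideanSpace ℝ (Fin N) → EuclideanSpace ℝ (Fin N))
    (μ L : ℝ) (hμ : 0 < μ) (hμL : μ ≤ L)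
    (hgrad : ∀ x, HasGradientAt f (f' x) x)
    (hsc : StrongConvexOn Set.univ μ f)
    (hLip : LipschitzWith (Real.toNNReal L) f')
    (hgconv : ConvexOn ℝ Set.univ g)
    (α : ℝ) (hα : α ∈ Set.Ioc 0 (1 / L))
    (Y Yp Ystar : EuclideanSpace ℝ (Fin N))
    (hYp : IsMinOn (fun y => α * g y + (1 / 2) * ‖y - (Y - α • f' Y)‖ ^ 2) Set.univ Yp)
    (hYstar : IsMinOn (fun y => f y + g y) Set.univ Ystar) :
    ‖Yp - Ystar‖ ^ 2 ≤ (1 - μ * α) * ‖Y - Ystar‖ ^ 2 := by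
  obtain ⟨hα0, hαL⟩ := hα
  have hL : 0 < L := hμ.trans_le hμL
  have hYp_sub : HasSubgradientAt (fun y => α * g y) ((Y - α • f' Y) - Yp) Yp :=
    IsMinOn.hasSubgradientAt_prox (by simpa using hgconv.smul hα0.le) hYp
  -- the minimizer is a fixed point of the proximal gradient map
  have hYstar_sub :
      HasSubgradientAt (fun y => α * g y) ((Ystar - α • f' Ystar) - Ystar) Ystar := by
    simpa using
      (IsMinOn.hasSubgradientAt_neg_gradient hgconv (hgrad Ystar) hYstar).const_mul hα0.le
  have hstep := hsc.sq_norm_gradient_step_sub_le hμ.le hgrad hLip (Real.toNNReal_pos.2 hL) hα0.le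
    (by rw [Real.coe_toNNReal L hL.le]; exact (le_div_iff₀ hL).1 hαL) Y Ystar
  calc ‖Yp - Ystar‖ ^ 2 ≤ ‖(Y - α • f' Y) - (Ystar - α • f' Ystar)‖ ^ 2 := by
        gcongr; exact hYp_sub.norm_sub_le hYstar_sub
    _ ≤ (1 - μ * α) * ‖Y - Ystar‖ ^ 2 := hstep

/-- Linear contraction of the proximal gradient step for a μ-strongly convex, L-smooth f
plus a proper closed convex g, with step-size α ∈ (0, 1/L]. -/
theorem stmt8 {N : ℕ} (f g : EuclideanSpace ℝ (Fin N) → ℝ)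
    (f' : EuclideanSpace ℝ (Fin N) → EuclideanSpace ℝ (Fin N))
    (μ L : ℝ) (hμ : 0 < μ) (hμL : μ ≤ L)
    (hgrad : ∀ x, HasGradientAt f (f' x) x)
    (hsc : StrongConvexOn Set.univ μ f)
    (hLip : LipschitzWith (Real.toNNReal L) f')
    (hgconv : ConvexOn ℝ Set.univ g) (hgclosed : LowerSemicontinuous g)
    (α : ℝ) (hα : α ∈ Set.Ioc 0 (1 / L))
    (Y Yp Ystar : EuclideanSpace ℝ (Fin N))
    (hYp : IsMinOn (fun y => α * g y + (1 / 2) * ‖y - (Y - α • f' Y)‖ ^ 2) Set.univ Yp)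
    (hYstar : IsMinOn (fun y => f y + g y) Set.univ Ystar) :
    ‖Yp - Ystar‖ ^ 2 ≤ (1 - μ * α) * ‖Y - Ystar‖ ^ 2 :=
  stmt8_general f g f' μ L hμ hμL hgrad hsc hLip hgconv α hα Y Yp Ystar hYp hYstar
end

section
/- Suppose Δ₁, Δ₂ ∈ ℝ^N satisfy ⟨Δ₁, Δ₂⟩ > 0 and ‖Δ₂‖ ≤ L′ ‖Δ₁‖. Define α_s = ‖Δ₁‖²/⟨Δ₁, Δ₂⟩ and α_m = ⟨Δ₁, Δ₂⟩/‖Δ₂‖². If α_m/α_s > 1/2 then α_m > 1/(√2 L′); if α_m/α_s ≤ 1/2 then α_s − α_m/2 ≥ 3/(2√2 L′). Hence the Barzilai–Borwein initial step-size is always at least 1/(√2 L′). -/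
open scoped RealInnerProductSpace

/-- Lower bounds for the Barzilai–Borwein initial step-size. -/
theorem stmt9 {N : ℕ} (Δ₁ Δ₂ : EuclideanSpace ℝ (Fin N)) (L' : ℝ) (hL' : 0 < L')
    (h₁ : Δ₁ ≠ 0) (h₂ : Δ₂ ≠ 0)
    (hpos : (0 : ℝ) < ⟪Δ₁, Δ₂⟫) (hbound : ‖Δ₂‖ ≤ L' * ‖Δ₁‖) :
    letI αs : ℝ := ‖Δ₁‖ ^ 2 / ⟪Δ₁, Δ₂⟫
    letI αm : ℝ := ⟪Δ₁, Δ₂⟫ / ‖Δ₂‖ ^ 2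
    (αm / αs > 1 / 2 → αm > 1 / (Real.sqrt 2 * L')) ∧
      (αm / αs ≤ 1 / 2 → αs - αm / 2 ≥ 3 / (2 * Real.sqrt 2 * L')) ∧
      (if αm / αs > 1 / 2 then αm else αs - αm / 2) ≥ 1 / (Real.sqrt 2 * L') := by
  have ha : (0:ℝ) < ‖Δ₁‖ := norm_pos_iff.mpr h₁
  have hb : (0:ℝ) < ‖Δ₂‖ := norm_pos_iff.mpr h₂
  set a := ‖Δ₁‖ with ha'
  set b := ‖Δ₂‖ with hb'
  set c := ⟪Δ₁, Δ₂⟫ with hc'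
  have hs2 : (0:ℝ) < Real.sqrt 2 := by positivity
  have hs2sq : Real.sqrt 2 ^ 2 = 2 := Real.sq_sqrt (by norm_num)
  have hratio : (c / b ^ 2) / (a ^ 2 / c) = c ^ 2 / (a ^ 2 * b ^ 2) := by
    field_simp
  have part1 : c / b ^ 2 / (a ^ 2 / c) > 1 / 2 → c / b ^ 2 > 1 / (Real.sqrt 2 * L') := by
    intro h
    rw [hratio] at h
    have k1 : a ^ 2 * b ^ 2 < 2 * c ^ 2 := by
      rw [gt_iff_lt, div_lt_div_iff₀ (by norm_num) (by positivity)] at h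
      linarith
    have h1 : a * b < Real.sqrt 2 * c := by
      by_contra hcon
      push_neg at hcon
      nlinarith [mul_pos ha hb, mul_pos hs2 hpos]
    rw [gt_iff_lt, div_lt_div_iff₀ (by positivity) (by positivity)]
    nlinarith [mul_lt_mul_of_pos_right h1 hL', mul_le_mul_of_nonneg_right hbound hb.le,
      mul_pos hs2 hL']
  have part2 : c / b ^ 2 / (a ^ 2 / c) ≤ 1 / 2 →
      a ^ 2 / c - c / b ^ 2 / 2 ≥ 3 / (2 * Real.sqrt 2 * L') := by
    intro h
    rw [hratio] at h
    have k1 : 2 * c ^ 2 ≤ a ^ 2 * b ^ 2 := by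
      rw [div_le_div_iff₀ (by positivity) (by norm_num)] at h
      linarith
    have h1 : Real.sqrt 2 * c ≤ a * b := by
      by_contra hcon
      push_neg at hcon
      nlinarith [mul_pos ha hb, mul_pos hs2 hpos]
    have hcomb : a ^ 2 / c - c / b ^ 2 / 2 = (2 * a ^ 2 * b ^ 2 - c ^ 2) / (2 * c * b ^ 2) := by
      field_simp
    rw [hcomb, ge_iff_le, div_le_div_iff₀ (by positivity) (by positivity)]
    have hA : c ^ 2 ≤ a ^ 2 * b ^ 2 / 2 := by linarith
    have hC : Real.sqrt 2 * a * b ^ 3 ≤ Real.sqrt 2 * L' * (a ^ 2 * b ^ 2) := by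
      have t := mul_le_mul_of_nonneg_right hbound
        (show (0:ℝ) ≤ Real.sqrt 2 * a * b ^ 2 by positivity)
      nlinarith [t]
    have hD : 2 * (c * b ^ 2) ≤ Real.sqrt 2 * a * b ^ 3 := by
      have t := mul_le_mul_of_nonneg_right h1
        (show (0:ℝ) ≤ Real.sqrt 2 * b ^ 2 by positivity)
      have e : Real.sqrt 2 * c * (Real.sqrt 2 * b ^ 2) = 2 * (c * b ^ 2) := by
        rw [show Real.sqrt 2 * c * (Real.sqrt 2 * b ^ 2)
            = Real.sqrt 2 ^ 2 * (c * b ^ 2) by ring, hs2sq]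
      rw [← e]
      calc Real.sqrt 2 * c * (Real.sqrt 2 * b ^ 2) ≤ a * b * (Real.sqrt 2 * b ^ 2) := t
        _ = Real.sqrt 2 * a * b ^ 3 := by ring
    have hB : (3 / 2) * (a ^ 2 * b ^ 2) * (2 * Real.sqrt 2 * L')
        ≤ (2 * a ^ 2 * b ^ 2 - c ^ 2) * (2 * Real.sqrt 2 * L') :=
      mul_le_mul_of_nonneg_right (by linarith) (by positivity)
    nlinarith [hB, hC, hD, mul_pos hs2 hL']
  refine ⟨part1, part2, ?_⟩
  split_ifs with h
  · exact (part1 h).le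
  · have := part2 (le_of_not_gt h)
    have hle : 1 / (Real.sqrt 2 * L') ≤ 3 / (2 * Real.sqrt 2 * L') := by
      rw [div_le_div_iff₀ (by positivity) (by positivity)]
      nlinarith [mul_pos hs2 hL']
    linarith
end

section
/- Let f(Y) = trace(Q X(Y) + Y* R Y X(Y)⁻¹) where X(Y) solves A X + X A* − B Y − Y* B* + V = 0, defined on the open set D_s of Y with X(Y) ≻ 0. Then the Hessian quadratic form of f satisfies ⟨Ỹ, ∇²f(Y; Ỹ)⟩ = 2 ‖R^{1/2} (Ỹ − Y X⁻¹ ℳ(Ỹ)) X^{−1/2}‖_F², where ℳ(Ỹ) solves A ℳ + ℳ A* = B Ỹ + Ỹ* B*. -/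
open Matrix
open scoped ComplexOrder

/-!
Along the line `Y + εỸ` the Lyapunov constraint is affine in `ε`, so injectivity of `𝒜₁` gives
`X(Y + εỸ) = X + εℳ` exactly, with `ℳ` Hermitian. Hence `f(Y + εỸ)` is the trace of
`Q(X + εℳ) + P(ε)(X + εℳ)⁻¹` with `P` quadratic in `ε`; since `(X + εℳ)⁻¹` has derivatives
`-X⁻¹ℳX⁻¹` and `2X⁻¹ℳX⁻¹ℳX⁻¹` at `0`, the second derivative is `2 tr(CᴴRCX⁻¹)` with
`C = Ỹ - YX⁻¹ℳ`, by completing the square under the trace. Splitting `R` and `X⁻¹` into their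
square roots turns this trace into the squared Frobenius norm.
-/

open Filter Topology

section Lyapunov

variable {ι κ 𝕜 : Type*} [Fintype ι] [Fintype κ] [RCLike 𝕜]

/-- The Lyapunov operator `𝒜₁`. -/
noncomputable def lyapunov (A : Matrix ι ι 𝕜) : Matrix ι ι 𝕜 →ₗ[ℝ] Matrix ι ι 𝕜 :=
  LinearMap.mulLeft ℝ A + LinearMap.mulRight ℝ Aᴴ

variable {A : Matrix ι ι 𝕜}

@[simp]
theorem lyapunov_apply (Z : Matrix ι ι 𝕜) : lyapunov A Z = A * Z + Z * Aᴴ := rfl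

theorem lyapunov_conjTranspose (Z : Matrix ι ι 𝕜) : lyapunov A Zᴴ = (lyapunov A Z)ᴴ := by
  simp [conjTranspose_add, conjTranspose_mul, add_comm]

theorem lyapunov_injective (h : ∀ Z, A * Z + Z * Aᴴ = 0 → Z = 0) :
    Function.Injective (lyapunov A) :=
  (injective_iff_map_eq_zero _).2 h

theorem isHermitian_of_lyapunov_eq {M C : Matrix ι ι 𝕜} (hA : Function.Injective (lyapunov A))
    (hM : lyapunov A M = C) (hC : C.IsHermitian) : M.IsHermitian :=
  hA <| by rw [lyapunov_conjTranspose, hM, hC.eq]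

theorem lyapunov_solution_add_smul {B : Matrix ι κ 𝕜} {V M : Matrix ι ι 𝕜}
    {X : Matrix κ ι 𝕜 → Matrix ι ι 𝕜} {Y Yt : Matrix κ ι 𝕜}
    (hA : Function.Injective (lyapunov A)) (hX : ∀ Y, lyapunov A (X Y) = B * Y + Yᴴ * Bᴴ - V)
    (hM : lyapunov A M = B * Yt + Ytᴴ * Bᴴ) (t : ℝ) :
    X (Y + t • Yt) = X Y + t • M :=
  hA <| by
    rw [map_add, map_smul, hX, hX, hM, conjTranspose_add, conjTranspose_smul, star_trivial,
      Matrix.mul_add, Matrix.add_mul, Matrix.mul_smul, Matrix.smul_mul]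
    module

end Lyapunov

theorem conjTranspose_add_smul_mul_mul_add_smul {ι κ 𝕜 : Type*} [Fintype κ] [RCLike 𝕜]
    (Y Z : Matrix κ ι 𝕜) (R : Matrix κ κ 𝕜) (t : ℝ) :
    (Y + t • Z)ᴴ * R * (Y + t • Z) =
      Yᴴ * R * Y + t • (Zᴴ * R * Y + Yᴴ * R * Z) + (t * t) • (Zᴴ * R * Z) := by
  simp only [conjTranspose_add, conjTranspose_smul, star_trivial, Matrix.add_mul, Matrix.mul_add,
    Matrix.smul_mul, Matrix.mul_smul, smul_add, smul_smul]
  module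

section Derivatives

variable {𝕜 E : Type*} [NontriviallyNormedField 𝕜] [NormedAddCommGroup E] [NormedSpace 𝕜 E]

theorem hasDerivAt_add_smul (a b : E) (t : 𝕜) : HasDerivAt (fun s : 𝕜 => a + s • b) b t := by
  simpa using ((hasDerivAt_id t).smul_const b).const_add a

theorem hasDerivAt_add_smul_add_mul_smul (a b c : E) (t : 𝕜) :
    HasDerivAt (fun s : 𝕜 => a + s • b + (s * s) • c) (b + (2 * t) • c) t := by
  have h := (hasDerivAt_add_smul a b t).add (((hasDerivAt_id t).mul (hasDerivAt_id t)).smul_const c)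
  simp only [id, one_mul, mul_one, ← two_mul] at h
  exact h

theorem hasDerivAt_add_two_mul_smul (b c : E) (t : 𝕜) :
    HasDerivAt (fun s : 𝕜 => b + (2 * s) • c) ((2 : 𝕜) • c) t := by
  simpa using (((hasDerivAt_id t).const_mul 2).smul_const c).const_add b

theorem ContinuousLinearMap.iteratedDeriv_two_comp_eq {G : Type*} [NormedAddCommGroup G]
    [NormedSpace 𝕜 G] (L : E →L[𝕜] G) {f f' : 𝕜 → E} {f'' : E} {x : 𝕜}
    (hf : ∀ᶠ t in 𝓝 x, HasDerivAt f (f' t) t) (hf' : HasDerivAt f' f'' x) :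
    iteratedDeriv 2 (fun t => L (f t)) x = L f'' := by
  have hLf : deriv (fun t => L (f t)) =ᶠ[𝓝 x] fun t => L (f' t) :=
    hf.mono fun t ht => (L.hasFDerivAt.comp_hasDerivAt t ht).deriv
  rw [iteratedDeriv_succ, iteratedDeriv_one, hLf.deriv_eq]
  exact (L.hasFDerivAt.comp_hasDerivAt x hf').deriv

end Derivatives

section MatrixInverse

attribute [local instance] Matrix.linftyOpNormedRing Matrix.linftyOpNormedAlgebra

variable {𝕜 α ι : Type*} [NontriviallyNormedField 𝕜] [RCLike α] [NormedAlgebra 𝕜 α]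
  [Fintype ι] [DecidableEq ι]

theorem HasDerivAt.matrix_inv {g : 𝕜 → Matrix ι ι α} {g' : Matrix ι ι α} {x : 𝕜}
    (hg : HasDerivAt g g' x) (hx : IsUnit (g x)) :
    HasDerivAt (fun t => (g t)⁻¹) (-((g x)⁻¹ * g' * (g x)⁻¹)) x := by
  have h := (hasFDerivAt_ringInverse (𝕜 := 𝕜) hx.unit).comp_hasDerivAt x hg
  rw [show (fun t => (g t)⁻¹) = Ring.inverse ∘ g from funext fun t => nonsing_inv_eq_ringInverse _]
  refine h.congr_deriv ?_
  simp [nonsing_inv_eq_ringInverse]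

theorem eventually_hasDerivAt_inv_add_smul {X₀ : Matrix ι ι α} (M : Matrix ι ι α)
    (hX₀ : IsUnit X₀) :
    ∀ᶠ t in 𝓝 (0 : 𝕜), HasDerivAt (fun s : 𝕜 => (X₀ + s • M)⁻¹)
      (-((X₀ + t • M)⁻¹ * M * (X₀ + t • M)⁻¹)) t := by
  have hline : ∀ t : 𝕜, HasDerivAt (fun s : 𝕜 => X₀ + s • M) M t := hasDerivAt_add_smul X₀ M
  have hunit : ∀ᶠ t in 𝓝 (0 : 𝕜), IsUnit (X₀ + t • M) :=
    (hline 0).continuousAt.eventually_mem (Units.isOpen.mem_nhds (by simpa using hX₀))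
  exact hunit.mono fun t ht => (hline t).matrix_inv ht

theorem iteratedDeriv_two_re_trace_mul_inv_add_smul {Q X₀ M P₀ P₁ P₂ : Matrix ι ι ℂ}
    (hX₀ : IsUnit X₀) :
    iteratedDeriv 2 (fun t : ℝ => ((Q * (X₀ + t • M)).trace +
        ((P₀ + t • P₁ + (t * t) • P₂) * (X₀ + t • M)⁻¹).trace).re) 0 =
      2 * (P₂ * X₀⁻¹ - P₁ * (X₀⁻¹ * M * X₀⁻¹) + P₀ * (X₀⁻¹ * M * X₀⁻¹ * M * X₀⁻¹)).trace.re := by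
  let L : Matrix ι ι ℂ →L[ℝ] ℝ := Complex.reCLM.comp
    (LinearMap.toContinuousLinearMap ((traceLinearMap ι ℂ ℂ).restrictScalars ℝ))
  set N := fun t : ℝ => (X₀ + t • M)⁻¹ with hN_def
  have hN := eventually_hasDerivAt_inv_add_smul (𝕜 := ℝ) M hX₀
  have hN₀ : HasDerivAt N (-(X₀⁻¹ * M * X₀⁻¹)) 0 := by simpa using hN.self_of_nhds
  have hP : ∀ t : ℝ, HasDerivAt (fun t : ℝ => P₀ + t • P₁ + (t * t) • P₂) (P₁ + (2 * t) • P₂) t :=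
    hasDerivAt_add_smul_add_mul_smul P₀ P₁ P₂
  have hP' : HasDerivAt (fun t : ℝ => P₁ + (2 * t) • P₂) ((2 : ℝ) • P₂) 0 :=
    hasDerivAt_add_two_mul_smul P₁ P₂ 0
  have hQ : ∀ t : ℝ, HasDerivAt (fun t : ℝ => Q * (X₀ + t • M)) (Q * M) t := fun t =>
    (hasDerivAt_add_smul X₀ M t).const_mul Q
  have h₁ := hN.mono fun t ht => (hQ t).add ((hP t).mul ht)
  have h₂ := (hasDerivAt_const (0 : ℝ) (Q * M)).add
    ((hP'.mul hN₀).add ((hP 0).mul ((hN₀.mul_const M).mul hN₀).neg))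
  convert L.iteratedDeriv_two_comp_eq h₁ h₂ using 1
  · congr 1; ext t; exact (map_add L _ _).symm
  · change _ = Complex.re (Matrix.trace (_ : Matrix ι ι ℂ))
    simp [hN_def, Matrix.mul_assoc, Matrix.mul_add, trace_add]
    ring

end MatrixInverse

section TraceIdentities

variable {ι κ α : Type*} [Fintype ι] [Fintype κ] [CommRing α] [StarRing α]

theorem trace_conjTranspose_sub_mul_mul_sub_mul {Y Yt : Matrix κ ι α} {R : Matrix κ κ α}
    {S M : Matrix ι ι α} (hS : S.IsHermitian) (hM : M.IsHermitian) :
    ((Yt - Y * S * M)ᴴ * R * (Yt - Y * S * M) * S).trace =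
      (Ytᴴ * R * Yt * S - (Ytᴴ * R * Y + Yᴴ * R * Yt) * (S * M * S) +
        Yᴴ * R * Y * (S * M * S * M * S)).trace := by
  have hC : (Yt - Y * S * M)ᴴ = Ytᴴ - M * S * Yᴴ := by
    simp [conjTranspose_mul, hM.eq, hS.eq, Matrix.mul_assoc]
  rw [hC]
  simp only [Matrix.sub_mul, Matrix.mul_sub, Matrix.add_mul, trace_sub, trace_add, Matrix.mul_assoc]
  rw [trace_mul_comm M, trace_mul_comm M]
  simp only [Matrix.mul_assoc]
  rw [trace_mul_comm S, trace_mul_comm S]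
  simp only [Matrix.mul_assoc]
  ring

theorem trace_conjTranspose_mul_self_of_mul_self_eq {C : Matrix κ ι α} {T R : Matrix κ κ α}
    {S P : Matrix ι ι α} (hT : T.IsHermitian) (hS : S.IsHermitian) (hTR : T * T = R)
    (hSP : S * S = P) :
    ((T * C * S)ᴴ * (T * C * S)).trace = (Cᴴ * R * C * P).trace := by
  rw [conjTranspose_mul, conjTranspose_mul, hT.eq, hS.eq, ← hTR, ← hSP]
  simp only [Matrix.mul_assoc]
  rw [trace_mul_comm S]
  simp only [Matrix.mul_assoc]

end TraceIdentities

theorem trace_conjTranspose_mul_self_eq_sum_normSq {ι κ : Type*} [Fintype ι] [Fintype κ]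
    (W : Matrix κ ι ℂ) : (Wᴴ * W).trace = ((∑ i, ∑ j, Complex.normSq (W i j) : ℝ) : ℂ) := by
  simp only [trace, diag, mul_apply, conjTranspose_apply, Complex.ofReal_sum,
    Complex.normSq_eq_conj_mul_self, Complex.star_def]
  exact Finset.sum_comm

theorem stmt11_general {n m : ℕ} (A : Matrix (Fin n) (Fin n) ℂ) (B : Matrix (Fin n) (Fin m) ℂ)
    (Q V : Matrix (Fin n) (Fin n) ℂ) (R : Matrix (Fin m) (Fin m) ℂ)
    (X : Matrix (Fin m) (Fin n) ℂ → Matrix (Fin n) (Fin n) ℂ)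
    (hX : ∀ Y, A * X Y + X Y * Aᴴ - B * Y - Yᴴ * Bᴴ + V = 0)
    (hLyapInj : ∀ Z : Matrix (Fin n) (Fin n) ℂ, A * Z + Z * Aᴴ = 0 → Z = 0)
    (Y Yt : Matrix (Fin m) (Fin n) ℂ) (hY : (X Y).PosDef)
    (M : Matrix (Fin n) (Fin n) ℂ) (hM : A * M + M * Aᴴ = B * Yt + Ytᴴ * Bᴴ)
    (Rh : Matrix (Fin m) (Fin m) ℂ) (hRh : Rh.PosSemidef) (hRh2 : Rh * Rh = R)
    (Xih : Matrix (Fin n) (Fin n) ℂ) (hXih : Xih.PosSemidef) (hXih2 : Xih * Xih = (X Y)⁻¹) :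
    iteratedDeriv 2 (fun ε : ℝ =>
        ((Q * X (Y + ε • Yt)).trace +
          ((Y + ε • Yt)ᴴ * R * (Y + ε • Yt) * (X (Y + ε • Yt))⁻¹).trace).re) 0 =
      2 * ∑ i, ∑ j, Complex.normSq ((Rh * (Yt - Y * (X Y)⁻¹ * M) * Xih) i j) := by
  have hA : Function.Injective (lyapunov A) := lyapunov_injective hLyapInj
  have hMlyap : lyapunov A M = B * Yt + Ytᴴ * Bᴴ := hM
  have hMh : M.IsHermitian := isHermitian_of_lyapunov_eq hA hMlyap <| by
    simp [IsHermitian, conjTranspose_add, conjTranspose_mul, add_comm]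
  have hline : ∀ ε : ℝ, X (Y + ε • Yt) = X Y + ε • M :=
    lyapunov_solution_add_smul hA
      (fun Y => by rw [lyapunov_apply, ← sub_eq_zero, ← hX Y]; abel) hMlyap
  simp only [hline, conjTranspose_add_smul_mul_mul_add_smul]
  rw [iteratedDeriv_two_re_trace_mul_inv_add_smul hY.isUnit,
    ← trace_conjTranspose_sub_mul_mul_sub_mul hY.1.inv hMh,
    ← trace_conjTranspose_mul_self_of_mul_self_eq hRh.1 hXih.1 hRh2 hXih2,
    trace_conjTranspose_mul_self_eq_sum_normSq,
    Complex.ofReal_re]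

/-- Hessian quadratic form of f(Y) = trace(Q X(Y) + Yᴴ R Y X(Y)⁻¹):
⟨Ỹ, ∇²f(Y; Ỹ)⟩ = 2‖R^{1/2}(Ỹ − Y X⁻¹ ℳ(Ỹ)) X^{−1/2}‖_F². -/
theorem stmt11 {n m : ℕ} (A : Matrix (Fin n) (Fin n) ℂ) (B : Matrix (Fin n) (Fin m) ℂ)
    (Q V : Matrix (Fin n) (Fin n) ℂ) (R : Matrix (Fin m) (Fin m) ℂ)
    (hQ : Q.PosDef) (hR : R.PosDef) (hV : V.PosDef)
    (X : Matrix (Fin m) (Fin n) ℂ → Matrix (Fin n) (Fin n) ℂ)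
    (hX : ∀ Y, A * X Y + X Y * Aᴴ - B * Y - Yᴴ * Bᴴ + V = 0)
    (hLyapInj : ∀ Z : Matrix (Fin n) (Fin n) ℂ, A * Z + Z * Aᴴ = 0 → Z = 0)
    (Y Yt : Matrix (Fin m) (Fin n) ℂ) (hY : (X Y).PosDef)
    (M : Matrix (Fin n) (Fin n) ℂ) (hM : A * M + M * Aᴴ = B * Yt + Ytᴴ * Bᴴ)
    (Rh : Matrix (Fin m) (Fin m) ℂ) (hRh : Rh.PosSemidef) (hRh2 : Rh * Rh = R)
    (Xih : Matrix (Fin n) (Fin n) ℂ) (hXih : Xih.PosSemidef) (hXih2 : Xih * Xih = (X Y)⁻¹) :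
    iteratedDeriv 2 (fun ε : ℝ =>
        ((Q * X (Y + ε • Yt)).trace +
          ((Y + ε • Yt)ᴴ * R * (Y + ε • Yt) * (X (Y + ε • Yt))⁻¹).trace).re) 0 =
      2 * ∑ i, ∑ j, Complex.normSq ((Rh * (Yt - Y * (X Y)⁻¹ * M) * Xih) i j) :=
  stmt11_general A B Q V R X hX hLyapInj Y Yt hY M hM Rh hRh hRh2 Xih hXih hXih2
end

section
/- Under the setting of the covariance/feedback parameterization, the Hessian quadratic form ⟨Ỹ, ∇²f(Y; Ỹ)⟩ = 2 ‖R^{1/2}(Ỹ − Y X⁻¹ ℳ(Ỹ)) X^{−1/2}‖_F² is strictly positive for every nonzero Ỹ; i.e., if Ỹ = Y X⁻¹ ℳ(Ỹ) with ℳ(Ỹ) = 𝒜₁⁻¹(ℬ(Ỹ)), then Ỹ = 0. -/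
open Matrix
open scoped ComplexOrder

/-- Strict positivity of the Hessian quadratic form: if Ỹ = Y X⁻¹ ℳ(Ỹ) then Ỹ = 0. -/
theorem stmt12 {n m : ℕ} (A : Matrix (Fin n) (Fin n) ℂ) (B : Matrix (Fin n) (Fin m) ℂ)
    (V : Matrix (Fin n) (Fin n) ℂ) (R : Matrix (Fin m) (Fin m) ℂ)
    (hV : V.PosDef) (hR : R.PosDef)
    (hLyapInj : ∀ Z₁ Z₂ : Matrix (Fin n) (Fin n) ℂ,
      A * Z₁ + Z₁ * Aᴴ = A * Z₂ + Z₂ * Aᴴ → Z₁ = Z₂)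
    (Y Yt : Matrix (Fin m) (Fin n) ℂ) (X : Matrix (Fin n) (Fin n) ℂ)
    (hXeq : A * X + X * Aᴴ = B * Y + Yᴴ * Bᴴ - V) (hXpd : X.PosDef)
    (M : Matrix (Fin n) (Fin n) ℂ) (hM : A * M + M * Aᴴ = B * Yt + Ytᴴ * Bᴴ)
    (hUniq : ∀ Z₁ Z₂ : Matrix (Fin n) (Fin n) ℂ,
      (A - B * (Y * X⁻¹)) * Z₁ + Z₁ * (A - B * (Y * X⁻¹))ᴴ =
        (A - B * (Y * X⁻¹)) * Z₂ + Z₂ * (A - B * (Y * X⁻¹))ᴴ → Z₁ = Z₂)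
    (hYt : Yt = Y * X⁻¹ * M) :
    Yt = 0 := by
  -- M is Hermitian
  have hMH : Mᴴ = M := by
    apply hLyapInj
    have h1 := congrArg conjTranspose hM
    simp only [conjTranspose_add, conjTranspose_mul, conjTranspose_conjTranspose] at h1
    rw [hM]
    calc A * Mᴴ + Mᴴ * Aᴴ = Mᴴ * Aᴴ + A * Mᴴ := add_comm _ _
      _ = Ytᴴ * Bᴴ + B * Yt := h1
      _ = B * Yt + Ytᴴ * Bᴴ := add_comm _ _
  have hYtH : Ytᴴ = M * (Y * X⁻¹)ᴴ := by
    rw [hYt, conjTranspose_mul, hMH]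
  have hM0 : M = 0 := by
    apply hUniq
    rw [Matrix.mul_zero, Matrix.zero_mul, add_zero]
    rw [conjTranspose_sub, conjTranspose_mul, Matrix.sub_mul, Matrix.mul_sub]
    rw [hYtH, hYt] at hM
    rw [sub_add_sub_comm, hM]
    simp [Matrix.mul_assoc]
  rw [hYt, hM0, Matrix.mul_zero]
end

section
/- Let X ≻ 0 satisfy the Lyapunov equation (A − BK) X + X (A − BK)* + V = 0 with V ≻ 0, and let v be a unit eigenvector of X for its smallest eigenvalue λ_min(X). Then with D = A X^{1/2} − B K X^{1/2}, one has λ_min(X) = (v* V v)² / (v*(D + D*)v)² ≥ λ_min(V)² / (4 ‖D‖₂²). -/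
/-!
Pairing the Lyapunov equation with the eigenvector `v` gives `2 λ Re (v* F v) = - v* V v` for
`F = A - B K`. Since `X^{1/2} v = √λ v`, also `Re v* (D + D*) v = 2 √λ Re (v* F v)`, and eliminating
`Re (v* F v)` yields the identity. The bound follows from `v* V v ≥ λ_min(V)` and
`|v* (D + D*) v| ≤ 2 ‖D‖₂`.
-/

open Matrix
open scoped ComplexOrder
open scoped Matrix.Norms.L2Operator

namespace Matrix

variable {𝕜 ι : Type*} [RCLike 𝕜] [Fintype ι]

theorem star_dotProduct_conjTranspose_mulVec (M : Matrix ι ι 𝕜) (v : ι → 𝕜) :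
    star v ⬝ᵥ Mᴴ *ᵥ v = star (star v ⬝ᵥ M *ᵥ v) := by
  rw [dotProduct_mulVec, ← star_dotProduct_star, star_star, star_mulVec]

theorem re_star_dotProduct_add_conjTranspose_mulVec (M : Matrix ι ι 𝕜) (v : ι → 𝕜) :
    RCLike.re (star v ⬝ᵥ (M + Mᴴ) *ᵥ v) = 2 * RCLike.re (star v ⬝ᵥ M *ᵥ v) := by
  rw [add_mulVec, dotProduct_add, star_dotProduct_conjTranspose_mulVec, map_add,
    RCLike.star_def, RCLike.conj_re, two_mul]

theorem norm_star_dotProduct_mulVec_le [DecidableEq ι] (M : Matrix ι ι 𝕜) (v : ι → 𝕜) :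
    ‖star v ⬝ᵥ M *ᵥ v‖ ≤ ‖M‖ * RCLike.re (star v ⬝ᵥ v) := by
  have hv : ‖WithLp.toLp 2 v‖ ^ 2 = RCLike.re (star v ⬝ᵥ v) := by
    rw [← inner_self_eq_norm_sq (𝕜 := 𝕜), EuclideanSpace.inner_eq_star_dotProduct, dotProduct_comm]
  rw [← hv]
  calc ‖star v ⬝ᵥ M *ᵥ v‖
      = ‖inner 𝕜 (WithLp.toLp 2 v) ((EuclideanSpace.equiv ι 𝕜).symm (M *ᵥ v))‖ := by
        rw [EuclideanSpace.inner_eq_star_dotProduct, dotProduct_comm]; rfl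
    _ ≤ ‖WithLp.toLp 2 v‖ * ‖(EuclideanSpace.equiv ι 𝕜).symm (M *ᵥ v)‖ := norm_inner_le_norm _ _
    _ ≤ ‖WithLp.toLp 2 v‖ * (‖M‖ * ‖WithLp.toLp 2 v‖) := by
        gcongr; exact M.l2_opNorm_mulVec (WithLp.toLp 2 v)
    _ = ‖M‖ * ‖WithLp.toLp 2 v‖ ^ 2 := by ring

open scoped MatrixOrder in
theorem IsHermitian.smul_star_dotProduct_le [DecidableEq ι] {V : Matrix ι ι 𝕜}
    (hV : V.IsHermitian) {c : ℝ} (hc : ∀ i, c ≤ hV.eigenvalues i) (v : ι → 𝕜) :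
    (c : 𝕜) * (star v ⬝ᵥ v) ≤ star v ⬝ᵥ V *ᵥ v := by
  have hle := (algebraMap_le_iff_le_spectrum (R := ℝ) (a := V) (r := c) hV).2
    (by simpa [hV.spectrum_real_eq_range_eigenvalues] using hc)
  have := (le_iff.1 hle).dotProduct_mulVec_nonneg v
  rw [Algebra.algebraMap_eq_smul_one, sub_mulVec, dotProduct_sub, smul_mulVec, one_mulVec,
    dotProduct_smul, sub_nonneg] at this
  simpa [RCLike.real_smul_eq_coe_mul] using this

theorem PosSemidef.mulVec_eq_sqrt_smul_of_mul_self_mulVec [DecidableEq ι] {S : Matrix ι ι 𝕜}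
    (hS : S.PosSemidef) {μ : ℝ} (hμ : 0 < μ) {v : ι → 𝕜} (hv : (S * S) *ᵥ v = (μ : 𝕜) • v) :
    S *ᵥ v = (√μ : 𝕜) • v := by
  -- `(S + √μ) (S v - √μ v) = (S * S - μ) v = 0`, and `S + √μ` is positive definite.
  have hpos : (S + (√μ : 𝕜) • 1).PosDef :=
    PosDef.posSemidef_add hS (PosDef.one.smul (RCLike.ofReal_pos.2 (Real.sqrt_pos.2 hμ)))
  have hsq : (√μ : 𝕜) * √μ = μ := by rw [← RCLike.ofReal_mul, Real.mul_self_sqrt hμ.le]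
  refine sub_eq_zero.1 (mulVec_injective_iff_isUnit.2 hpos.isUnit ?_)
  rw [mulVec_zero, mulVec_sub, add_mulVec, add_mulVec, mulVec_mulVec, hv, smul_mulVec,
    one_mulVec, mulVec_smul, smul_mulVec, one_mulVec, smul_smul, hsq]
  module

theorem IsHermitian.re_star_dotProduct_mul_add_mul_conjTranspose_mulVec {X : Matrix ι ι 𝕜}
    (hX : X.IsHermitian) (F : Matrix ι ι 𝕜) {μ : ℝ} {v : ι → 𝕜} (hv : X *ᵥ v = (μ : 𝕜) • v) :
    RCLike.re (star v ⬝ᵥ (F * X + X * Fᴴ) *ᵥ v) = 2 * μ * RCLike.re (star v ⬝ᵥ F *ᵥ v) := by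
  rw [← hX.eq, ← conjTranspose_mul, hX.eq, re_star_dotProduct_add_conjTranspose_mulVec,
    ← mulVec_mulVec, hv, mulVec_smul, dotProduct_smul, smul_eq_mul, RCLike.re_ofReal_mul]
  ring

theorem PosDef.pos_of_mulVec_eq_smul [DecidableEq ι] {X : Matrix ι ι 𝕜} (hX : X.PosDef) {μ : ℝ}
    {v : ι → 𝕜} (hv0 : v ≠ 0) (hv : X *ᵥ v = (μ : 𝕜) • v) : 0 < μ := by
  have hXv := hX.re_dotProduct_pos hv0
  rw [hv, dotProduct_smul, smul_eq_mul, RCLike.re_ofReal_mul] at hXv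
  have hvv := (PosDef.one : (1 : Matrix ι ι 𝕜).PosDef).re_dotProduct_pos hv0
  rw [one_mulVec] at hvv
  exact pos_of_mul_pos_left hXv hvv.le

theorem abs_re_star_dotProduct_add_conjTranspose_mulVec_le [DecidableEq ι] (M : Matrix ι ι 𝕜)
    (v : ι → 𝕜) : |RCLike.re (star v ⬝ᵥ (M + Mᴴ) *ᵥ v)| ≤ 2 * ‖M‖ * RCLike.re (star v ⬝ᵥ v) := by
  rw [re_star_dotProduct_add_conjTranspose_mulVec, abs_mul, abs_two, mul_assoc]
  gcongr
  exact (RCLike.abs_re_le_norm _).trans (norm_star_dotProduct_mulVec_le M v)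

end Matrix

theorem eq_sq_div_sq_of_two_mul_mul_eq_neg {μ a c : ℝ} (hμ : 0 < μ) (ha : a ≠ 0)
    (h : 2 * μ * c = -a) : μ = a ^ 2 / (2 * √μ * c) ^ 2 := by
  have hc : c ≠ 0 := by rintro rfl; exact ha (by linarith)
  obtain rfl : a = -(2 * μ * c) := by linarith
  rw [mul_pow, mul_pow, Real.sq_sqrt hμ.le]
  field_simp

theorem sq_div_sq_le_sq_div_sq {l a b d : ℝ} (hl : 0 ≤ l) (hla : l ≤ a) (hb : b ≠ 0)
    (hbd : |b| ≤ d) : l ^ 2 / d ^ 2 ≤ a ^ 2 / b ^ 2 := by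
  obtain ⟨hlow, hup⟩ := abs_le.1 hbd
  exact div_le_div₀ (sq_nonneg a) (pow_le_pow_left₀ hl hla 2) (by positivity) (sq_le_sq' hlow hup)

theorem stmt14_general {n m : ℕ} (A : Matrix (Fin n) (Fin n) ℂ) (B : Matrix (Fin n) (Fin m) ℂ)
    (K : Matrix (Fin m) (Fin n) ℂ) (V X Xh : Matrix (Fin n) (Fin n) ℂ)
    (hV : V.PosDef) (hX : X.PosDef)
    (hLyap : (A - B * K) * X + X * (A - B * K)ᴴ + V = 0)
    (hXh : Xh.PosSemidef) (hXh2 : Xh * Xh = X)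
    (lam lamV : ℝ)
    (hlamV : IsLeast (Set.range hV.1.eigenvalues) lamV)
    (v : Fin n → ℂ) (hv : X.mulVec v = (lam : ℂ) • v) (hv1 : star v ⬝ᵥ v = 1) :
    letI D : Matrix (Fin n) (Fin n) ℂ := A * Xh - B * K * Xh
    lam = (star v ⬝ᵥ V.mulVec v).re ^ 2 / (star v ⬝ᵥ (D + Dᴴ).mulVec v).re ^ 2 ∧
      lam ≥ lamV ^ 2 / (4 * ‖D‖ ^ 2) := by
  set D := A * Xh - B * K * Xh
  set F := A - B * K
  have hvne : v ≠ 0 := by rintro rfl; simp at hv1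
  have hlam : 0 < lam := hX.pos_of_mulVec_eq_smul hvne hv
  have hXhv : Xh *ᵥ v = (√lam : ℂ) • v :=
    hXh.mulVec_eq_sqrt_smul_of_mul_self_mulVec hlam (by rw [hXh2]; exact hv)
  have hDre : (star v ⬝ᵥ (D + Dᴴ) *ᵥ v).re = 2 * √lam * (star v ⬝ᵥ F *ᵥ v).re := by
    rw [← RCLike.re_to_complex, re_star_dotProduct_add_conjTranspose_mulVec,
      show D = F * Xh from (sub_mul _ _ _).symm, ← mulVec_mulVec, hXhv, mulVec_smul,
      dotProduct_smul, smul_eq_mul, RCLike.re_to_complex, Complex.re_ofReal_mul, mul_assoc]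
  have hLyap_re : 2 * lam * (star v ⬝ᵥ F *ᵥ v).re = -(star v ⬝ᵥ V *ᵥ v).re := by
    have := congrArg (fun M => RCLike.re (star v ⬝ᵥ M *ᵥ v)) (eq_neg_of_add_eq_zero_left hLyap)
    simpa [neg_mulVec, hX.1.re_star_dotProduct_mul_add_mul_conjTranspose_mulVec F hv] using this
  have hlam_eq := eq_sq_div_sq_of_two_mul_mul_eq_neg hlam (hV.re_dotProduct_pos hvne).ne' hLyap_re
  rw [← hDre] at hlam_eq
  obtain ⟨⟨j, rfl⟩, hlamV_le⟩ := hlamV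
  have hlamV_re : hV.1.eigenvalues j ≤ (star v ⬝ᵥ V *ᵥ v).re := by
    have := hV.1.smul_star_dotProduct_le (fun i => hlamV_le ⟨i, rfl⟩) v
    rw [hv1, mul_one] at this
    exact (Complex.le_def.1 this).1
  have hD_le := abs_re_star_dotProduct_add_conjTranspose_mulVec_le D v
  rw [hv1, RCLike.one_re, mul_one] at hD_le
  refine ⟨hlam_eq, ?_⟩
  rw [hlam_eq, ge_iff_le, show 4 * ‖D‖ ^ 2 = (2 * ‖D‖) ^ 2 by ring]
  refine sq_div_sq_le_sq_div_sq (hV.eigenvalues_pos j).le hlamV_re (fun hb => ?_) hD_le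
  exact hlam.ne' (by simpa [hb] using hlam_eq)

/-- Lower bound on the smallest eigenvalue of the closed-loop covariance. -/
theorem stmt14 {n m : ℕ} (A : Matrix (Fin n) (Fin n) ℂ) (B : Matrix (Fin n) (Fin m) ℂ)
    (K : Matrix (Fin m) (Fin n) ℂ) (V X Xh : Matrix (Fin n) (Fin n) ℂ)
    (hV : V.PosDef) (hX : X.PosDef)
    (hLyap : (A - B * K) * X + X * (A - B * K)ᴴ + V = 0)
    (hXh : Xh.PosSemidef) (hXh2 : Xh * Xh = X)
    (lam lamV : ℝ)
    (hlam : IsLeast (Set.range hX.1.eigenvalues) lam)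
    (hlamV : IsLeast (Set.range hV.1.eigenvalues) lamV)
    (v : Fin n → ℂ) (hv : X.mulVec v = (lam : ℂ) • v) (hv1 : star v ⬝ᵥ v = 1) :
    letI D : Matrix (Fin n) (Fin n) ℂ := A * Xh - B * K * Xh
    lam = (star v ⬝ᵥ V.mulVec v).re ^ 2 / (star v ⬝ᵥ (D + Dᴴ).mulVec v).re ^ 2 ∧
      lam ≥ lamV ^ 2 / (4 * ‖D‖ ^ 2) :=
  stmt14_general A B K V X Xh hV hX hLyap hXh hXh2 lam lamV hlamV v hv hv1
end

section
/- Let g be proper, closed, convex, and coercive on ℝ^N, let ‖·‖² denote the squared Euclidean norm, and let f be differentiable. Then for each v, the proximal point prox_{αg}(v − α∇f(v)) depends continuously on α > 0. -/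
open scoped RealInnerProductSpace

lemma strong_min_aux {N : ℕ} (g : EuclideanSpace ℝ (Fin N) → ℝ)
    (hgconv : ConvexOn ℝ Set.univ g) (α : ℝ) (hα : 0 < α)
    (u x : EuclideanSpace ℝ (Fin N))
    (hx : IsMinOn (fun y => α * g y + (1 / 2) * ‖y - u‖ ^ 2) Set.univ x)
    (z : EuclideanSpace ℝ (Fin N)) :
    α * g x + (1 / 2) * ‖x - u‖ ^ 2 + (1 / 4) * ‖x - z‖ ^ 2
      ≤ α * g z + (1 / 2) * ‖z - u‖ ^ 2 := by
  set m : EuclideanSpace ℝ (Fin N) := (1/2 : ℝ) • x + (1/2 : ℝ) • z with hm_def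
  have hm := isMinOn_iff.mp hx m (Set.mem_univ m)
  have hconv := hgconv.2 (Set.mem_univ x) (Set.mem_univ z)
    (by norm_num : (0:ℝ) ≤ 1/2) (by norm_num : (0:ℝ) ≤ 1/2) (by norm_num)
  have hconv' : g m ≤ (1/2) * g x + (1/2) * g z := by
    rw [hm_def]; simpa only [smul_eq_mul] using hconv
  have hgm : α * g m ≤ α * ((1/2) * g x + (1/2) * g z) :=
    mul_le_mul_of_nonneg_left hconv' hα.le
  have hpar : ‖m - u‖ ^ 2 = (1/2) * ‖x - u‖ ^ 2 + (1/2) * ‖z - u‖ ^ 2 - (1/4) * ‖x - z‖ ^ 2 := by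
    have h1 : m - u = (1/2 : ℝ) • ((x - u) + (z - u)) := by
      rw [hm_def]; module
    have h2 : x - z = (x - u) - (z - u) := by module
    have hpl := parallelogram_law_with_norm ℝ (x - u) (z - u)
    have h3 : ‖m - u‖ ^ 2 = (1/4) * ‖(x - u) + (z - u)‖ ^ 2 := by
      rw [h1, norm_smul, mul_pow]
      norm_num
    rw [h3, h2]
    nlinarith [hpl]
  rw [hpar] at hm
  linarith

lemma key_est {N : ℕ} (g : EuclideanSpace ℝ (Fin N) → ℝ)
    (hgconv : ConvexOn ℝ Set.univ g) (v gv : EuclideanSpace ℝ (Fin N))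
    (α β : ℝ) (hα : 0 < α) (hβ : 0 < β) (x z : EuclideanSpace ℝ (Fin N))
    (hx : IsMinOn (fun y => α * g y + (1 / 2) * ‖y - (v - α • gv)‖ ^ 2) Set.univ x)
    (hz : IsMinOn (fun y => β * g y + (1 / 2) * ‖y - (v - β • gv)‖ ^ 2) Set.univ z) :
    (1/2) * ‖x - z‖ ^ 2 ≤ |α - β| * (|g z - g x| + ‖x - z‖ * ‖gv‖) := by
  have h1 := strong_min_aux g hgconv α hα (v - α • gv) x hx z
  have h2 := strong_min_aux g hgconv β hβ (v - β • gv) z hz x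
  set w : EuclideanSpace ℝ (Fin N) := (α - β) • gv with hw_def
  have e1 : z - (v - α • gv) = (z - (v - β • gv)) + w := by rw [hw_def]; module
  have e2 : x - (v - α • gv) = (x - (v - β • gv)) + w := by rw [hw_def]; module
  rw [e1, e2, norm_add_sq_real, norm_add_sq_real] at h1
  have hin : ⟪z - (v - β • gv), w⟫ - ⟪x - (v - β • gv), w⟫ = ⟪z - x, w⟫ := by
    rw [← inner_sub_left]
    congr 1
    module
  have hcs : |⟪z - x, w⟫| ≤ ‖x - z‖ * (|α - β| * ‖gv‖) := by
    calc |⟪z - x, w⟫| ≤ ‖z - x‖ * ‖w‖ := abs_real_inner_le_norm _ _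
      _ = ‖x - z‖ * (|α - β| * ‖gv‖) := by
          rw [norm_sub_rev, hw_def, norm_smul, Real.norm_eq_abs]
  have habs1 : (α - β) * (g z - g x) ≤ |α - β| * |g z - g x| := by
    calc (α - β) * (g z - g x) ≤ |(α - β) * (g z - g x)| := le_abs_self _
      _ = |α - β| * |g z - g x| := abs_mul _ _
  have hrev : ‖z - x‖ = ‖x - z‖ := norm_sub_rev _ _
  rw [hrev] at h2
  have hinle : ⟪z - x, w⟫ ≤ |⟪z - x, w⟫| := le_abs_self _
  nlinarith [h1, h2, hin, hcs, habs1, hinle]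

set_option maxHeartbeats 1000000 in
/-- Continuity in the step-size α of the proximal-gradient point
prox_{αg}(v − α ∇f(v)), for g proper closed convex and coercive. -/
theorem stmt19 {N : ℕ} (g : EuclideanSpace ℝ (Fin N) → ℝ)
    (hgconv : ConvexOn ℝ Set.univ g) (hgclosed : LowerSemicontinuous g)
    (hgcoercive : Filter.Tendsto g (Filter.comap norm Filter.atTop) Filter.atTop)
    (f : EuclideanSpace ℝ (Fin N) → ℝ) (v gv : EuclideanSpace ℝ (Fin N))
    (hf : HasGradientAt f gv v)
    (P : ℝ → EuclideanSpace ℝ (Fin N))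
    (hP : ∀ α > 0, IsMinOn
      (fun y => α * g y + (1 / 2) * ‖y - (v - α • gv)‖ ^ 2) Set.univ (P α)) :
    ContinuousOn P (Set.Ioi 0) := by
  have hgcont : Continuous g := hgconv.locallyLipschitz.continuous
  -- g is bounded below
  obtain ⟨m, hm⟩ : ∃ m : ℝ, ∀ y, m ≤ g y := by
    have h0 : ∀ᶠ y in Filter.comap norm Filter.atTop, (0:ℝ) ≤ g y :=
      hgcoercive.eventually (Filter.eventually_ge_atTop 0)
    rw [Filter.eventually_comap] at h0
    obtain ⟨R, hR⟩ := Filter.eventually_atTop.mp h0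
    have hcomp : IsCompact (Metric.closedBall (0 : EuclideanSpace ℝ (Fin N)) (max R 0)) :=
      isCompact_closedBall _ _
    have hne : (Metric.closedBall (0 : EuclideanSpace ℝ (Fin N)) (max R 0)).Nonempty :=
      ⟨0, Metric.mem_closedBall_self (le_max_right R 0)⟩
    obtain ⟨y₀, _, hy₀⟩ := hcomp.exists_isMinOn hne hgcont.continuousOn
    refine ⟨min (g y₀) 0, fun y => ?_⟩
    by_cases hy : ‖y‖ ≤ max R 0
    · exact le_trans (min_le_left _ _)
        (isMinOn_iff.mp hy₀ y (by simpa [Metric.mem_closedBall, dist_zero_right] using hy))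
    · push_neg at hy
      exact le_trans (min_le_right _ _) (hR ‖y‖ (le_trans (le_max_left R 0) hy.le) y rfl)
  rw [Metric.continuousOn_iff]
  intro α₀ hα₀ ε hε
  have hα₀' : 0 < α₀ := hα₀
  obtain ⟨b, hb⟩ : ∃ b : ℝ, b = α₀ + 1 := ⟨_, rfl⟩
  have hb0 : 0 < b := by rw [hb]; positivity
  have hgvm : 0 ≤ g v - m := sub_nonneg.mpr (hm v)
  obtain ⟨C₀, hC₀⟩ : ∃ C₀ : ℝ, C₀ = b * (g v - m) + (1/2) * b^2 * ‖gv‖^2 := ⟨_, rfl⟩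
  have hC₀0 : 0 ≤ C₀ := by rw [hC₀]; positivity
  obtain ⟨R₁, hR₁⟩ : ∃ R₁ : ℝ, R₁ = Real.sqrt (2*C₀) + ‖v‖ + b*‖gv‖ := ⟨_, rfl⟩
  have hR₁0 : 0 ≤ R₁ := by rw [hR₁]; positivity
  -- uniform bound on P β for 0 < β ≤ b
  have hPbd : ∀ β : ℝ, 0 < β → β ≤ b → ‖P β‖ ≤ R₁ := by
    intro β hβ hβb
    have hmin := isMinOn_iff.mp (hP β hβ) v (Set.mem_univ v)
    have hv : v - (v - β • gv) = β • gv := by module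
    rw [hv, norm_smul, Real.norm_eq_abs, abs_of_pos hβ] at hmin
    have h1 : β * m ≤ β * g (P β) := mul_le_mul_of_nonneg_left (hm _) hβ.le
    have h2 : β * (g v - m) ≤ b * (g v - m) := mul_le_mul_of_nonneg_right hβb hgvm
    have h3 : β^2*‖gv‖^2 ≤ b^2*‖gv‖^2 := by
      have hb2 : β^2 ≤ b^2 := by rw [hb]; nlinarith [hβb, hβ, hb ▸ hb0]
      exact mul_le_mul_of_nonneg_right hb2 (sq_nonneg _)
    have hkey : ‖P β - (v - β • gv)‖^2 ≤ 2*C₀ := by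
      rw [hC₀]; nlinarith [hmin, h1, h2, h3]
    have hsq : ‖P β - (v - β • gv)‖ ≤ Real.sqrt (2*C₀) := Real.le_sqrt_of_sq_le hkey
    have h4 : ‖v - β • gv‖ ≤ ‖v‖ + b * ‖gv‖ := by
      have : ‖v - β • gv‖ ≤ ‖v‖ + ‖β • gv‖ := norm_sub_le _ _
      rw [norm_smul, Real.norm_eq_abs, abs_of_pos hβ] at this
      nlinarith [norm_nonneg gv]
    calc ‖P β‖ = ‖(P β - (v - β • gv)) + (v - β • gv)‖ := by congr 1; module
      _ ≤ ‖P β - (v - β • gv)‖ + ‖v - β • gv‖ := norm_add_le _ _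
      _ ≤ R₁ := by rw [hR₁]; linarith
  -- bound on |g| on the ball of radius R₁
  obtain ⟨M, hM⟩ : ∃ M : ℝ, ∀ y : EuclideanSpace ℝ (Fin N), ‖y‖ ≤ R₁ → |g y| ≤ M := by
    have hcomp : IsCompact (Metric.closedBall (0 : EuclideanSpace ℝ (Fin N)) R₁) :=
      isCompact_closedBall _ _
    have hne : (Metric.closedBall (0 : EuclideanSpace ℝ (Fin N)) R₁).Nonempty :=
      ⟨0, Metric.mem_closedBall_self hR₁0⟩
    obtain ⟨y₁, _, hy₁⟩ := hcomp.exists_isMaxOn hne (hgcont.abs).continuousOn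
    exact ⟨|g y₁|, fun y hy => isMaxOn_iff.mp hy₁ y
      (by simpa [Metric.mem_closedBall, dist_zero_right] using hy)⟩
  have hM0 : 0 ≤ M := le_trans (abs_nonneg _) (hM 0 (by simpa using hR₁0))
  obtain ⟨K, hK⟩ : ∃ K : ℝ, K = 2*(2*M + 2*R₁*‖gv‖) + 1 := ⟨_, rfl⟩
  have hK0 : 0 < K := by
    rw [hK]
    have : 0 ≤ R₁*‖gv‖ := mul_nonneg hR₁0 (norm_nonneg _)
    linarith
  refine ⟨min (min 1 α₀) (ε^2 / K), by positivity, ?_⟩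
  intro β hβmem hdist
  have hβ : 0 < β := hβmem
  rw [Real.dist_eq] at hdist
  have hd1 : |β - α₀| < min 1 α₀ := lt_of_lt_of_le hdist (min_le_left _ _)
  have hd2 : |β - α₀| < ε^2/K := lt_of_lt_of_le hdist (min_le_right _ _)
  have hd1' : β - α₀ < 1 := lt_of_le_of_lt (le_abs_self _) (lt_of_lt_of_le hd1 (min_le_left _ _))
  have hβb : β ≤ b := by rw [hb]; linarith
  have hα₀b : α₀ ≤ b := by rw [hb]; linarith
  have hx := hPbd β hβ hβb
  have hz := hPbd α₀ hα₀' hα₀b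
  have hkey := key_est g hgconv v gv β α₀ hβ hα₀' (P β) (P α₀) (hP β hβ) (hP α₀ hα₀')
  have hgb1 := hM _ hx
  have hgb2 := hM _ hz
  have habs : |g (P α₀) - g (P β)| ≤ 2*M := by
    calc |g (P α₀) - g (P β)| ≤ |g (P α₀)| + |g (P β)| := abs_sub _ _
      _ ≤ 2*M := by linarith
  have hnd : ‖P β - P α₀‖ ≤ 2*R₁ := by
    calc ‖P β - P α₀‖ ≤ ‖P β‖ + ‖P α₀‖ := norm_sub_le _ _
      _ ≤ 2*R₁ := by linarith
  rw [dist_eq_norm]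
  have hdd : ‖P β - P α₀‖^2 < ε^2 := by
    have h5 : |g (P α₀) - g (P β)| + ‖P β - P α₀‖*‖gv‖ ≤ 2*M + 2*R₁*‖gv‖ := by
      have := mul_le_mul_of_nonneg_right hnd (norm_nonneg gv)
      linarith
    have h6 : |β - α₀| * (|g (P α₀) - g (P β)| + ‖P β - P α₀‖*‖gv‖)
        ≤ |β - α₀| * (2*M + 2*R₁*‖gv‖) :=
      mul_le_mul_of_nonneg_left h5 (abs_nonneg _)
    have h7 : K * |β - α₀| < K * (ε^2/K) := mul_lt_mul_of_pos_left hd2 hK0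
    have h8 : K * (ε^2/K) = ε^2 := by field_simp
    nlinarith [abs_nonneg (β - α₀)]
  exact lt_of_pow_lt_pow_left₀ 2 hε.le hdd
end
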